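/- Let (Ω, F, P) be a probability space, d ≥ 1, N ≥ 1, E ≥ 1, G ≥ 0, and let t_0 ≤ t be natural numbers with t − t_0 ≤ E − 1. Let (η_s)_{s≥0} be a non-increasing sequence of nonnegative reals with η_{t_0} ≤ 2 η_t. For each client k = 1, …, N, suppose w_t^k = w̄_{t_0} − Σ_{s=t_0}^{t−1} η_s g_s^k, where w̄_{t_0} ∈ ℝ^d is a fixed common vector (the last synchronized model) and g_s^k : Ω → ℝ^d are square-integrable random vectors with E‖g_s^k‖² ≤ G² for all s, k. Let p_1, …, p_N be nonnegative weights summing to 1 and set w̄_t = Σ_{k=1}^N p_k w_t^k. Then E[ Σ_{k=1}^N p_k ‖w̄_t − w_t^k‖² ] ≤ 4 η_t² (E − 1)² G². -/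

import Mathlib

open MeasureTheory Finset

/-- Variance is bounded by the second moment. -/
lemma fedavg_var_le_second_moment {V : Type*} [NormedAddCommGroup V]
    [InnerProductSpace ℝ V] {N : ℕ} (p : Fin N → ℝ) (hp : ∀ k, 0 ≤ p k)
    (hp1 : ∑ k, p k = 1) (x : Fin N → V) :
    ∑ k, p k * ‖(∑ j, p j • x j) - x k‖ ^ 2 ≤ ∑ k, p k * ‖x k‖ ^ 2 := by
  set a : V := ∑ j, p j • x j with ha
  have hinner : ∑ k, p k * inner ℝ a (x k) = (‖a‖ : ℝ) ^ 2 := by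
    have : (inner ℝ a a : ℝ) = ∑ k, p k * inner ℝ a (x k) := by
      rw [ha]
      rw [inner_sum]
      congr 1
      ext k
      rw [real_inner_smul_right]
    rw [← this, real_inner_self_eq_norm_sq]
  have expand : ∀ k, ‖a - x k‖ ^ 2
      = ‖a‖ ^ 2 - 2 * inner ℝ a (x k) + ‖x k‖ ^ 2 := fun k => by
    rw [@norm_sub_sq_real]
  calc ∑ k, p k * ‖a - x k‖ ^ 2
      = ∑ k, (p k * ‖a‖ ^ 2 - 2 * (p k * inner ℝ a (x k)) + p k * ‖x k‖ ^ 2) := by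
        refine Finset.sum_congr rfl fun k _ => ?_
        rw [expand k]; ring
    _ = (∑ k, p k) * ‖a‖ ^ 2 - 2 * (∑ k, p k * inner ℝ a (x k))
          + ∑ k, p k * ‖x k‖ ^ 2 := by
        rw [Finset.sum_add_distrib, Finset.sum_sub_distrib, ← Finset.sum_mul,
          ← Finset.mul_sum]
    _ = ∑ k, p k * ‖x k‖ ^ 2 - ‖a‖ ^ 2 := by rw [hp1, hinner]; ring
    _ ≤ ∑ k, p k * ‖x k‖ ^ 2 := by nlinarith [sq_nonneg ‖a‖]

/-- Bounded-divergence lemma for FedAvg-type local SGD: if each client starts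
from the common synchronized model `w̄_{t₀}` and performs at most `E − 1` local
SGD steps with stochastic gradients of expected squared norm at most `G²`, using
a non-increasing learning rate schedule with `η_{t₀} ≤ 2 η_t`, then
`E[Σ_k p_k ‖w̄_t − w_t^k‖²] ≤ 4 η_t² (E−1)² G²`. -/
theorem fedavg_divergence_bound
    {Ω : Type*} [MeasureSpace Ω] (P : Measure Ω) [IsProbabilityMeasure P]
    (d N E : ℕ) (hd : 1 ≤ d) (hN : 1 ≤ N) (hE : 1 ≤ E)
    (G : ℝ) (hG : 0 ≤ G)
    (t₀ t : ℕ) (ht₀ : t₀ ≤ t) (hlen : t - t₀ ≤ E - 1)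
    (η : ℕ → ℝ) (hηnonneg : ∀ s, 0 ≤ η s) (hηmono : ∀ s s', s ≤ s' → η s' ≤ η s)
    (hη2 : η t₀ ≤ 2 * η t)
    (wbar₀ : EuclideanSpace ℝ (Fin d))
    (g : ℕ → Fin N → Ω → EuclideanSpace ℝ (Fin d))
    (hgL2 : ∀ s k, MemLp (g s k) 2 P)
    (hgbound : ∀ s k, ∫ ω, ‖g s k ω‖ ^ 2 ∂P ≤ G ^ 2)
    (w : Fin N → Ω → EuclideanSpace ℝ (Fin d))
    (hw : ∀ k ω, w k ω = wbar₀ - ∑ s ∈ Finset.Ico t₀ t, η s • g s k ω)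
    (p : Fin N → ℝ) (hp : ∀ k, 0 ≤ p k) (hp1 : ∑ k, p k = 1)
    (wbar : Ω → EuclideanSpace ℝ (Fin d))
    (hwbar : ∀ ω, wbar ω = ∑ k, p k • w k ω) :
    ∫ ω, (∑ k, p k * ‖wbar ω - w k ω‖ ^ 2) ∂P ≤
      4 * η t ^ 2 * ((E : ℝ) - 1) ^ 2 * G ^ 2 := by
  set n : ℕ := t - t₀ with hn
  have hηt : 0 ≤ η t := hηnonneg t
  have hnE : (n : ℝ) ≤ (E : ℝ) - 1 := by
    have : ((E - 1 : ℕ) : ℝ) = (E : ℝ) - 1 := by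
      rw [Nat.cast_sub hE]; norm_num
    rw [← this]; exact_mod_cast hlen
  have hn0 : (0 : ℝ) ≤ (n : ℝ) := Nat.cast_nonneg n
  -- integrability of ‖g s k ·‖²
  have hgint : ∀ s k, Integrable (fun ω => ‖g s k ω‖ ^ 2) P := fun s k =>
    (memLp_two_iff_integrable_sq_norm (hgL2 s k).aestronglyMeasurable).mp (hgL2 s k)
  -- the dominating function
  set M : Ω → ℝ := fun ω =>
    4 * η t ^ 2 * n * ∑ k, p k * ∑ s ∈ Finset.Ico t₀ t, ‖g s k ω‖ ^ 2 with hM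
  have hMint : Integrable M P := by
    apply Integrable.const_mul
    apply integrable_finset_sum
    intro k _
    exact (integrable_finset_sum _ fun s _ => hgint s k).const_mul _
  -- pointwise bound
  have hpt : ∀ ω, (∑ k, p k * ‖wbar ω - w k ω‖ ^ 2) ≤ M ω := by
    intro ω
    set x : Fin N → EuclideanSpace ℝ (Fin d) :=
      fun k => -(∑ s ∈ Finset.Ico t₀ t, η s • g s k ω) with hx
    have hwx : ∀ k, w k ω = wbar₀ + x k := fun k => by
      rw [hw k ω, hx]; abel
    have hdiff : ∀ k, wbar ω - w k ω = (∑ j, p j • x j) - x k := by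
      intro k
      rw [hwbar ω, hwx k]
      have : ∑ j, p j • w j ω = wbar₀ + ∑ j, p j • x j := by
        simp only [hwx, smul_add, Finset.sum_add_distrib, ← Finset.sum_smul, hp1,
          one_smul]
      rw [this]; abel
    have step1 : (∑ k, p k * ‖wbar ω - w k ω‖ ^ 2)
        ≤ ∑ k, p k * ‖x k‖ ^ 2 := by
      calc (∑ k, p k * ‖wbar ω - w k ω‖ ^ 2)
          = ∑ k, p k * ‖(∑ j, p j • x j) - x k‖ ^ 2 := by
            refine Finset.sum_congr rfl fun k _ => ?_; rw [hdiff k]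
        _ ≤ ∑ k, p k * ‖x k‖ ^ 2 :=
            fedavg_var_le_second_moment p hp hp1 x
    have step2 : ∀ k, ‖x k‖ ^ 2
        ≤ 4 * η t ^ 2 * n * ∑ s ∈ Finset.Ico t₀ t, ‖g s k ω‖ ^ 2 := by
      intro k
      have h1 : ‖x k‖ ≤ 2 * η t * ∑ s ∈ Finset.Ico t₀ t, ‖g s k ω‖ := by
        rw [hx, norm_neg]
        calc ‖∑ s ∈ Finset.Ico t₀ t, η s • g s k ω‖
            ≤ ∑ s ∈ Finset.Ico t₀ t, ‖η s • g s k ω‖ := norm_sum_le _ _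
          _ ≤ ∑ s ∈ Finset.Ico t₀ t, 2 * η t * ‖g s k ω‖ := by
              refine Finset.sum_le_sum fun s hs => ?_
              rw [norm_smul, Real.norm_eq_abs, abs_of_nonneg (hηnonneg s)]
              have hs' : t₀ ≤ s := (Finset.mem_Ico.mp hs).1
              exact mul_le_mul_of_nonneg_right
                ((hηmono t₀ s hs').trans hη2) (norm_nonneg _)
          _ = 2 * η t * ∑ s ∈ Finset.Ico t₀ t, ‖g s k ω‖ := by
              rw [Finset.mul_sum]
      have h2 : (∑ s ∈ Finset.Ico t₀ t, ‖g s k ω‖) ^ 2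
          ≤ n * ∑ s ∈ Finset.Ico t₀ t, ‖g s k ω‖ ^ 2 := by
        have := sq_sum_le_card_mul_sum_sq (s := Finset.Ico t₀ t)
          (f := fun s => ‖g s k ω‖)
        rwa [Nat.card_Ico, ← hn] at this
      have hx0 : 0 ≤ ‖x k‖ := norm_nonneg _
      have hsum0 : 0 ≤ ∑ s ∈ Finset.Ico t₀ t, ‖g s k ω‖ :=
        Finset.sum_nonneg fun s _ => norm_nonneg _
      calc ‖x k‖ ^ 2 ≤ (2 * η t * ∑ s ∈ Finset.Ico t₀ t, ‖g s k ω‖) ^ 2 := by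
            apply sq_le_sq' _ h1; linarith [h1, hx0]
        _ = 4 * η t ^ 2 * (∑ s ∈ Finset.Ico t₀ t, ‖g s k ω‖) ^ 2 := by ring
        _ ≤ 4 * η t ^ 2 * (n * ∑ s ∈ Finset.Ico t₀ t, ‖g s k ω‖ ^ 2) := by
            apply mul_le_mul_of_nonneg_left h2; positivity
        _ = 4 * η t ^ 2 * n * ∑ s ∈ Finset.Ico t₀ t, ‖g s k ω‖ ^ 2 := by ring
    calc (∑ k, p k * ‖wbar ω - w k ω‖ ^ 2)
        ≤ ∑ k, p k * ‖x k‖ ^ 2 := step1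
      _ ≤ ∑ k, p k * (4 * η t ^ 2 * n * ∑ s ∈ Finset.Ico t₀ t, ‖g s k ω‖ ^ 2) := by
          refine Finset.sum_le_sum fun k _ => ?_
          exact mul_le_mul_of_nonneg_left (step2 k) (hp k)
      _ = M ω := by
          simp only [hM, Finset.mul_sum]
          refine Finset.sum_congr rfl fun k _ => ?_
          refine Finset.sum_congr rfl fun s _ => ?_
          ring
  have hintM : ∫ ω, M ω ∂P ≤ 4 * η t ^ 2 * ((E : ℝ) - 1) ^ 2 * G ^ 2 := by
    have hMcalc : ∫ ω, M ω ∂P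
        = 4 * η t ^ 2 * n * ∑ k, p k * ∑ s ∈ Finset.Ico t₀ t, ∫ ω, ‖g s k ω‖ ^ 2 ∂P := by
      rw [hM, integral_const_mul]
      congr 1
      rw [integral_finset_sum _ fun k _ =>
        (integrable_finset_sum _ fun s _ => hgint s k).const_mul _]
      refine Finset.sum_congr rfl fun k _ => ?_
      rw [integral_const_mul, integral_finset_sum _ fun s _ => hgint s k]
    rw [hMcalc]
    have hinner : (∑ k, p k * ∑ s ∈ Finset.Ico t₀ t, ∫ ω, ‖g s k ω‖ ^ 2 ∂P)
        ≤ n * G ^ 2 := by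
      calc (∑ k, p k * ∑ s ∈ Finset.Ico t₀ t, ∫ ω, ‖g s k ω‖ ^ 2 ∂P)
          ≤ ∑ k, p k * ((n : ℝ) * G ^ 2) := by
            refine Finset.sum_le_sum fun k _ => ?_
            refine mul_le_mul_of_nonneg_left ?_ (hp k)
            calc (∑ s ∈ Finset.Ico t₀ t, ∫ ω, ‖g s k ω‖ ^ 2 ∂P)
                ≤ ∑ s ∈ Finset.Ico t₀ t, G ^ 2 :=
                  Finset.sum_le_sum fun s _ => hgbound s k
              _ = (n : ℝ) * G ^ 2 := by
                  rw [Finset.sum_const, Nat.card_Ico, ← hn, nsmul_eq_mul]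
        _ = (n : ℝ) * G ^ 2 := by rw [← Finset.sum_mul, hp1, one_mul]
    calc 4 * η t ^ 2 * n * ∑ k, p k * ∑ s ∈ Finset.Ico t₀ t, ∫ ω, ‖g s k ω‖ ^ 2 ∂P
        ≤ 4 * η t ^ 2 * n * ((n : ℝ) * G ^ 2) := by
          apply mul_le_mul_of_nonneg_left hinner; positivity
      _ = 4 * η t ^ 2 * ((n : ℝ) ^ 2 * G ^ 2) := by ring
      _ ≤ 4 * η t ^ 2 * (((E : ℝ) - 1) ^ 2 * G ^ 2) := by
          apply mul_le_mul_of_nonneg_left _ (by positivity)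
          apply mul_le_mul_of_nonneg_right _ (by positivity)
          exact pow_le_pow_left₀ hn0 hnE 2
      _ = 4 * η t ^ 2 * ((E : ℝ) - 1) ^ 2 * G ^ 2 := by ring
  calc ∫ ω, (∑ k, p k * ‖wbar ω - w k ω‖ ^ 2) ∂P
      ≤ ∫ ω, M ω ∂P := by
        apply integral_mono_of_nonneg
        · filter_upwards with ω
          exact Finset.sum_nonneg fun k _ => mul_nonneg (hp k) (by positivity)
        · exact hMint
        · filter_upwards with ω; exact hpt ω
    _ ≤ 4 * η t ^ 2 * ((E : ℝ) - 1) ^ 2 * G ^ 2 := hintM
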